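/- arXiv:2108.11789 — 7 statements merged into one kernel-verified Lean document; each statement's English description precedes it below -/
import Mathlib

section
/- Let G be a compact topological group and φ a continuous automorphism of G such that G equals the closure of the subgroup generated by all commutators [g,φ] = g⁻¹·φ(g) for g ∈ G. If N is a normal subgroup of G contained in the fixed-point subgroup of φ, then N is contained in the center of G. -/
/-! For `n ∈ N` and `g ∈ G`, the conjugate `g n g⁻¹` lies in `N` and is therefore fixed by `φ`,
so `φ(g) n φ(g)⁻¹ = g n g⁻¹`: conjugation by `g` and by `φ(g)` agree on `n`, i.e. `n` commutes
with `g⁻¹ φ(g)`. Hence the centralizer of `n`, a closed subgroup, contains the generators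
`g⁻¹ φ(g)` of a dense subgroup, so it is all of `G`. -/

/-- The commutator `[a,b] = a⁻¹b⁻¹ab`. -/
def cmt {G : Type*} [Group G] (a b : G) : G := a⁻¹ * b⁻¹ * a * b

theorem Commute.inv_mul_of_conj_eq {G : Type*} [Group G] {a x y : G}
    (h : x * a * x⁻¹ = y * a * y⁻¹) : Commute a (x⁻¹ * y) := by
  have h' : a * (x⁻¹ * y) = x⁻¹ * (y * a * y⁻¹) * y := by rw [← h]; group
  rw [Commute, SemiconjBy, h']
  group

theorem Subgroup.Normal.commute_inv_mul_map_of_forall_map_eq {G : Type*} [Group G]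
    {N : Subgroup G} (hN : N.Normal) (φ : G →* G) (hfix : ∀ g ∈ N, φ g = g)
    {n : G} (hn : n ∈ N) (g : G) : Commute n (g⁻¹ * φ g) := by
  apply Commute.inv_mul_of_conj_eq
  calc g * n * g⁻¹ = φ (g * n * g⁻¹) := (hfix _ (hN.conj_mem n hn g)).symm
    _ = φ g * n * (φ g)⁻¹ := by rw [map_mul, map_mul, map_inv, hfix n hn]

theorem Subgroup.mem_center_of_forall_commute_of_dense_closure {G : Type*} [Group G]
    [TopologicalSpace G] [IsTopologicalGroup G] [T2Space G] {s : Set G}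
    (hs : (closure s).topologicalClosure = ⊤) {a : G} (ha : ∀ x ∈ s, Commute a x) :
    a ∈ center G := by
  have hle : closure s ≤ centralizer {a} :=
    (closure_le _).2 fun x hx => mem_centralizer_singleton_iff.2 (ha x hx).symm
  have htop : centralizer {a} = ⊤ :=
    top_unique (hs ▸ (closure s).topologicalClosure_minimal hle (Set.isClosed_centralizer _))
  exact centralizer_eq_top_iff_subset.1 htop rfl

theorem stmt0_general {G : Type*} [Group G] [TopologicalSpace G] [IsTopologicalGroup G]
    [T2Space G]
    (φ : G ≃* G)
    (hgen : (Subgroup.closure {x : G | ∃ g : G, x = g⁻¹ * φ g}).topologicalClosure = ⊤)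
    (N : Subgroup G) (hN : N.Normal)
    (hfix : ∀ g ∈ N, φ g = g) :
    N ≤ Subgroup.center G := by
  intro n hn
  refine Subgroup.mem_center_of_forall_commute_of_dense_closure hgen ?_
  rintro _ ⟨g, rfl⟩
  exact hN.commute_inv_mul_map_of_forall_map_eq φ.toMonoidHom hfix hn g

/-- For a continuous automorphism `φ` of a compact group `G` with
`G = [G,φ]` (topologically generated by the commutators `g⁻¹·φ(g)`),
any normal subgroup contained in the fixed points of `φ` is central. -/
theorem stmt0 {G : Type*} [Group G] [TopologicalSpace G] [IsTopologicalGroup G]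
    [CompactSpace G] [T2Space G]
    (φ : G ≃* G) (hφ : Continuous φ)
    (hgen : (Subgroup.closure {x : G | ∃ g : G, x = g⁻¹ * φ g}).topologicalClosure = ⊤)
    (N : Subgroup G) (hN : N.Normal)
    (hfix : ∀ g ∈ N, φ g = g) :
    N ≤ Subgroup.center G :=
  stmt0_general φ hgen N hN hfix
end

section
/- If an element g of a group G has a finite Engel sink, then g has a smallest (under inclusion) Engel sink E(g), and for every s ∈ E(g) there exists a positive integer k such that s = [s, g, g, …, g] with g repeated k times. -/
/-- The left-normed iterated commutator `[x, ₙg]` with `n` copies of `g`. -/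
def engel {G : Type*} [Group G] (x g : G) : ℕ → G
  | 0 => x
  | n + 1 => cmt (engel x g n) g

/-- `E` is an Engel sink of `g`: for every `x`, all sufficiently long
commutators `[x, g, …, g]` lie in `E`. -/
def IsEngelSink {G : Type*} [Group G] (g : G) (E : Set G) : Prop :=
  ∀ x : G, ∃ N : ℕ, ∀ n ≥ N, engel x g n ∈ E

lemma engel_add {G : Type*} [Group G] (x g : G) (n k : ℕ) :
    engel x g (n + k) = engel (engel x g n) g k := by
  induction k with
  | zero => rfl
  | succ k ih => show cmt (engel x g (n + k)) g = _; rw [ih]; rfl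

/-- If `g` has a finite Engel sink, then it has a smallest Engel sink `E`,
and every `s ∈ E` satisfies `s = [s, ₖg]` for some positive `k`. -/
theorem stmt2 {G : Type*} [Group G] (g : G)
    (h : ∃ E : Set G, IsEngelSink g E ∧ E.Finite) :
    ∃ E : Set G, IsEngelSink g E ∧ (∀ E' : Set G, IsEngelSink g E' → E ⊆ E') ∧
      ∀ s ∈ E, ∃ k : ℕ, 0 < k ∧ s = engel s g k := by
  obtain ⟨E₀, hE₀, hE₀fin⟩ := h
  set E : Set G := {s | ∃ x : G, ∀ N : ℕ, ∃ n ≥ N, engel x g n = s} with hEdef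
  have hsink : IsEngelSink g E := by
    intro x
    obtain ⟨N₀, hN₀⟩ := hE₀ x
    -- the set of bad indices is finite
    have hbad : {n : ℕ | engel x g n ∉ E}.Finite := by
      have hsub : {n : ℕ | engel x g n ∉ E} ⊆
          Set.Iio N₀ ∪ ⋃ v ∈ E₀ \ E, {n : ℕ | engel x g n = v} := by
        intro n hn
        by_cases hlt : n < N₀
        · exact Or.inl hlt
        · refine Or.inr ?_
          have hv : engel x g n ∈ E₀ := hN₀ n (le_of_not_gt hlt)
          exact Set.mem_biUnion ⟨hv, hn⟩ rfl
      refine Set.Finite.subset ?_ hsub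
      refine (Set.finite_Iio N₀).union ?_
      refine Set.Finite.biUnion (hE₀fin.subset Set.diff_subset) ?_
      intro v hv
      have : ¬ (∀ N : ℕ, ∃ n ≥ N, engel x g n = v) := by
        intro hcon
        exact hv.2 ⟨x, hcon⟩
      push_neg at this
      obtain ⟨N, hN⟩ := this
      refine (Set.finite_Iio N).subset ?_
      intro n hn
      by_contra hge
      exact hN n (le_of_not_gt hge) hn
    obtain ⟨b, hb⟩ := hbad.bddAbove
    refine ⟨b + 1, fun n hn => ?_⟩
    by_contra hcon
    have := hb hcon
    omega
  refine ⟨E, hsink, ?_, ?_⟩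
  · intro E' hE' s hs
    obtain ⟨x, hx⟩ := hs
    obtain ⟨N, hN⟩ := hE' x
    obtain ⟨n, hn, hns⟩ := hx N
    exact hns ▸ hN n hn
  · intro s hs
    obtain ⟨x, hx⟩ := hs
    obtain ⟨n, -, hns⟩ := hx 0
    obtain ⟨m, hm, hms⟩ := hx (n + 1)
    refine ⟨m - n, by omega, ?_⟩
    have : m = n + (m - n) := by omega
    conv_lhs => rw [← hms, this, engel_add, hns]
end

section
/- Let φ : X → Y be a continuous map between non-empty profinite spaces (compact, Hausdorff, totally disconnected) such that the image φ(X) has cardinality strictly smaller than 2^ℵ₀. Then there exists a non-empty open subset U of X such that the restriction of φ to U is constant. -/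
/-!
If `f` were not constant on any non-empty open set, every non-empty clopen `S ⊆ X` could be
split into two non-empty clopen subsets whose images are disjoint: pick `a, b ∈ S` with
`f a ≠ f b` and pull back a clopen set of `Y` separating `f a` from `f b`. Iterating the split
along each branch `σ : ℕ → Bool` gives a nested sequence of non-empty clopen cells; by compactness
the cells meet, and points on different branches have different images, since the branches'
cells had disjoint images from the first place they diverge. Hence `f` takes at least `2^ℵ₀`
values.
-/

open Cardinal Set Function

section CantorScheme

variable {X Y : Type*} [TopologicalSpace X] {f : X → Y}

def IsClopenSplit (f : X → Y) (S : Set X) (T : Bool → Set X) : Prop :=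
  (∀ b, IsClopen (T b) ∧ (T b).Nonempty ∧ T b ⊆ S) ∧ Disjoint (f '' T false) (f '' T true)

def IsClopenSplitting (f : X → Y) (split : Set X → Bool → Set X) : Prop :=
  ∀ S, IsClopen S → S.Nonempty → IsClopenSplit f S (split S)

def cantorCell (split : Set X → Bool → Set X) (σ : ℕ → Bool) : ℕ → Set X
  | 0 => univ
  | n + 1 => split (cantorCell split σ n) (σ n)

theorem exists_isClopenSplit [TopologicalSpace Y] [TotallySeparatedSpace Y] (hf : Continuous f)
    {S : Set X} (hS : IsClopen S) {a b : X} (ha : a ∈ S) (hb : b ∈ S) (hab : f a ≠ f b) :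
    ∃ T, IsClopenSplit f S T := by
  obtain ⟨C, hC, haC, hbC⟩ := exists_isClopen_of_totally_separated hab
  refine ⟨fun i => S ∩ f ⁻¹' (if i then Cᶜ else C), fun i => ?_, ?_⟩
  · cases i
    · exact ⟨hS.inter (hC.preimage hf), ⟨a, ha, haC⟩, inter_subset_left⟩
    · exact ⟨hS.inter (hC.compl.preimage hf), ⟨b, hb, hbC⟩, inter_subset_left⟩
  · simp only [Bool.false_eq_true, ↓reduceIte]
    exact disjoint_compl_right.mono (image_subset_iff.2 fun x hx => hx.2)
      (image_subset_iff.2 fun x hx => hx.2)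

theorem cantorCell_congr {σ τ : ℕ → Bool} :
    ∀ {n}, (∀ m < n, σ m = τ m) → cantorCell split σ n = cantorCell split τ n
  | 0, _ => rfl
  | n + 1, hστ => by
    simp only [cantorCell, hστ n n.lt_succ_self,
      cantorCell_congr fun m hm => hστ m (hm.trans n.lt_succ_self)]

namespace IsClopenSplitting

variable {split : Set X → Bool → Set X} (h : IsClopenSplitting f split) (σ : ℕ → Bool)
include h

theorem isClopen_nonempty_cantorCell [Nonempty X] :
    ∀ n, IsClopen (cantorCell split σ n) ∧ (cantorCell split σ n).Nonempty
  | 0 => ⟨isClopen_univ, univ_nonempty⟩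
  | n + 1 =>
    let ⟨hc, hne⟩ := isClopen_nonempty_cantorCell n
    let ⟨hT, _⟩ := h _ hc hne
    ⟨(hT (σ n)).1, (hT (σ n)).2.1⟩

theorem cantorCell_succ_subset [Nonempty X] (n : ℕ) :
    cantorCell split σ (n + 1) ⊆ cantorCell split σ n :=
  let ⟨hc, hne⟩ := h.isClopen_nonempty_cantorCell σ n
  ((h _ hc hne).1 (σ n)).2.2

theorem iInter_cantorCell_nonempty [Nonempty X] [CompactSpace X] :
    (⋂ n, cantorCell split σ n).Nonempty :=
  IsCompact.nonempty_iInter_of_sequence_nonempty_isCompact_isClosed _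
    (h.cantorCell_succ_subset σ) (fun n => (h.isClopen_nonempty_cantorCell σ n).2)
    isCompact_univ (fun n => (h.isClopen_nonempty_cantorCell σ n).1.isClosed)

theorem exists_disjoint_image_cantorCell [Nonempty X] {τ : ℕ → Bool} (hστ : σ ≠ τ) :
    ∃ n, Disjoint (f '' cantorCell split σ n) (f '' cantorCell split τ n) := by
  have hdiff : ∃ n, σ n ≠ τ n := ne_iff.1 hστ
  set n := Nat.find hdiff
  have hcell : cantorCell split σ n = cantorCell split τ n :=
    cantorCell_congr fun m hm => not_not.1 (Nat.find_min hdiff hm)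
  obtain ⟨hc, hne⟩ := h.isClopen_nonempty_cantorCell σ n
  have hdisj := (h _ hc hne).2
  refine ⟨n + 1, ?_⟩
  simp only [cantorCell, ← hcell]
  have hn : σ n ≠ τ n := Nat.find_spec hdiff
  cases hσ : σ n <;> cases hτ : τ n <;> simp only [hσ, hτ, ne_eq, not_true_eq_false] at hn
  · exact hdisj
  · exact hdisj.symm

theorem continuum_le_mk_range [Nonempty X] [CompactSpace X] : 𝔠 ≤ #(range f) := by
  choose pt hpt using fun σ => h.iInter_cantorCell_nonempty σ
  have hinj : Injective fun σ => (⟨f (pt σ), mem_range_self _⟩ : range f) := by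
    intro σ τ hστ
    by_contra hne
    obtain ⟨n, hn⟩ := h.exists_disjoint_image_cantorCell σ hne
    exact hn.ne_of_mem (mem_image_of_mem f (mem_iInter.1 (hpt σ) n))
      (mem_image_of_mem f (mem_iInter.1 (hpt τ) n)) (congrArg Subtype.val hστ)
  simpa only [mk_pi, mk_fintype, Fintype.card_bool, Nat.cast_ofNat, prod_const, lift_id,
    mk_eq_aleph0, two_power_aleph0, lift_continuum, lift_uzero]
    using lift_mk_le_lift_mk_of_injective hinj

end IsClopenSplitting

end CantorScheme

theorem stmt4_general {X Y : Type*} [TopologicalSpace X] [TopologicalSpace Y]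
    [CompactSpace X]
    [CompactSpace Y] [T2Space Y] [TotallyDisconnectedSpace Y]
    [Nonempty X]
    (f : X → Y) (hf : Continuous f)
    (hcard : Cardinal.mk (Set.range f) < Cardinal.continuum) :
    ∃ U : Set X, IsOpen U ∧ U.Nonempty ∧ ∀ a ∈ U, ∀ b ∈ U, f a = f b := by
  by_contra! hconst
  have hsplit : ∀ S, IsClopen S → S.Nonempty → ∃ T, IsClopenSplit f S T := fun S hS hne =>
    let ⟨a, ha, b, hb, hab⟩ := hconst S hS.isOpen hne
    exists_isClopenSplit hf hS ha hb hab
  choose! split hsplit using hsplit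
  exact hcard.not_ge (IsClopenSplitting.continuum_le_mk_range hsplit)

/-- If a continuous map between non-empty profinite spaces has image of
cardinality strictly smaller than the continuum, then it is constant on some
non-empty open subset. -/
theorem stmt4 {X Y : Type*} [TopologicalSpace X] [TopologicalSpace Y]
    [CompactSpace X] [T2Space X] [TotallyDisconnectedSpace X]
    [CompactSpace Y] [T2Space Y] [TotallyDisconnectedSpace Y]
    [Nonempty X] [Nonempty Y]
    (f : X → Y) (hf : Continuous f)
    (hcard : Cardinal.mk (Set.range f) < Cardinal.continuum) :
    ∃ U : Set X, IsOpen U ∧ U.Nonempty ∧ ∀ a ∈ U, ∀ b ∈ U, f a = f b :=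
  stmt4_general f hf hcard
end

section
/- Let G be a profinite group and x ∈ G. If the conjugacy class {x^g : g ∈ G} has cardinality strictly less than 2^ℵ₀, then the conjugacy class is finite. -/
/-!
The centralizer `C` of `x` is closed, and the conjugacy class of `x` is in bijection with `G ⧸ C`.
If `C` is open, `G ⧸ C` is finite. Otherwise, since a closed subgroup of a profinite group is the
intersection of the open subgroups containing it, there is a strictly decreasing chain
`H₀ > H₁ > ⋯` of open subgroups containing `C`. Pick `tₙ ∈ Hₙ \ Hₙ₊₁`. By compactness, every
`a : ℕ → Bool` gives an element `g a` lying in each coset `t₀^a₀ ⋯ tₙ₋₁^aₙ₋₁ Hₙ`, and if `a`, `b`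
first differ at `n`, then `g a` and `g b` lie in different cosets of `Hₙ₊₁ ≥ C`. Hence
`[G : C] ≥ 2^ℵ₀`.
-/

open Cardinal Pointwise

def condProd {G : Type*} [Monoid G] (t : ℕ → G) (a : ℕ → Bool) : ℕ → G
  | 0 => 1
  | n + 1 => condProd t a n * cond (a n) (t n) 1

namespace Subgroup

variable {G : Type*} [Group G]

lemma condProd_inv_mul_succ_mem {H : ℕ → Subgroup G} {t : ℕ → G} (ht : ∀ n, t n ∈ H n)
    (a : ℕ → Bool) (n : ℕ) : (condProd t a n)⁻¹ * condProd t a (n + 1) ∈ H n := by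
  cases h : a n <;> simp [condProd, h, ht]

lemma eq_of_cond_inv_mul_cond_mem {K : Subgroup G} {t : G} (ht : t ∉ K) {a b : Bool}
    (h : (cond a t 1)⁻¹ * cond b t 1 ∈ K) : a = b := by
  cases a <;> cases b <;> simp_all

lemma eq_of_condProd_inv_mul_mem {H : ℕ → Subgroup G} {t : ℕ → G} (ht : ∀ n, t n ∉ H (n + 1))
    {a b : ℕ → Bool} {ga gb : G} (ha : ∀ n, (condProd t a n)⁻¹ * ga ∈ H n)
    (hb : ∀ n, (condProd t b n)⁻¹ * gb ∈ H n) (hab : ∀ n, ga⁻¹ * gb ∈ H n) : a = b := by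
  have step : ∀ n, condProd t a n = condProd t b n → a n = b n := fun n hn ↦ by
    refine eq_of_cond_inv_mul_cond_mem (ht n) ?_
    -- with equal prefixes, the product below telescopes to `(cond (a n) _ 1)⁻¹ * cond (b n) _ 1`
    have := mul_mem (mul_mem (ha (n + 1)) (hab (n + 1))) (inv_mem (hb (n + 1)))
    simp only [condProd, hn] at this
    convert this using 1
    group
  have hprod : ∀ n, condProd t a n = condProd t b n := by
    intro n
    induction n with
    | zero => rfl
    | succ n ih => simp only [condProd, ih, step n ih]
  exact funext fun n ↦ step n (hprod n)

section Compact

variable [TopologicalSpace G] [SeparatelyContinuousMul G] [CompactSpace G]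

lemma exists_forall_condProd_inv_mul_mem {H : ℕ → Subgroup G} (hH : Antitone H)
    (hclosed : ∀ n, IsClosed (H n : Set G)) {t : ℕ → G} (ht : ∀ n, t n ∈ H n) (a : ℕ → Bool) :
    ∃ g, ∀ n, (condProd t a n)⁻¹ * g ∈ H n := by
  let K : ℕ → Set G := fun n ↦ condProd t a n • (H n : Set G)
  have hK : ∀ n g, g ∈ K n ↔ (condProd t a n)⁻¹ * g ∈ H n := fun n g ↦ by
    simp [K, Set.mem_smul_set_iff_inv_smul_mem]
  have hKanti : ∀ n, K (n + 1) ⊆ K n := fun n g hg ↦ by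
    rw [hK] at hg ⊢
    simpa [mul_assoc] using mul_mem (condProd_inv_mul_succ_mem ht a n) (hH n.le_succ hg)
  obtain ⟨g, hg⟩ := IsCompact.nonempty_iInter_of_sequence_nonempty_isCompact_isClosed K hKanti
    (fun n ↦ ⟨condProd t a n, by simp [hK]⟩) ((hclosed 0).smul _).isCompact
    (fun n ↦ (hclosed n).smul _)
  exact ⟨g, fun n ↦ (hK n g).1 (Set.mem_iInter.1 hg n)⟩

theorem continuum_le_mk_quotient_of_strictAnti {H : ℕ → Subgroup G} (hH : StrictAnti H)
    (hclosed : ∀ n, IsClosed (H n : Set G)) {C : Subgroup G} (hC : ∀ n, C ≤ H n) :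
    𝔠 ≤ #(G ⧸ C) := by
  choose t ht using fun n ↦ SetLike.exists_of_lt (hH (Nat.lt_succ_self n))
  choose g hg using exists_forall_condProd_inv_mul_mem hH.antitone hclosed fun n ↦ (ht n).1
  have hinj : Function.Injective fun a ↦ (g a : G ⧸ C) := fun a b hab ↦
    eq_of_condProd_inv_mul_mem (fun n ↦ (ht n).2) (hg a) (hg b)
      fun n ↦ hC n (QuotientGroup.eq.1 hab)
  simpa [← two_power_aleph0] using lift_mk_le_lift_mk_of_injective hinj

end Compact

section Profinite

variable [TopologicalSpace G] [IsTopologicalGroup G] [CompactSpace G] [TotallyDisconnectedSpace G]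

theorem exists_isOpen_lt_of_not_isOpen {C : Subgroup G} (hC : IsClosed (C : Set G))
    (hCo : ¬IsOpen (C : Set G)) {H : Subgroup G} (hHo : IsOpen (H : Set G)) (hCH : C ≤ H) :
    ∃ H' : Subgroup G, IsOpen (H' : Set G) ∧ C ≤ H' ∧ H' < H := by
  obtain ⟨g, hgH, hgC⟩ := SetLike.exists_of_lt (hCH.lt_of_ne (by rintro rfl; exact hCo hHo))
  have hC_eq : C = sInf {N : Subgroup G | IsOpen (N : Set G) ∧ C ≤ N} :=
    ProfiniteGrp.closedSubgroup_eq_sInf_open ⟨C, hC⟩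
  rw [hC_eq, mem_sInf] at hgC
  push Not at hgC
  obtain ⟨N, ⟨hNo, hCN⟩, hgN⟩ := hgC
  exact ⟨H ⊓ N, hHo.inter hNo, le_inf hCH hCN,
    inf_le_left.lt_of_ne fun h ↦ hgN (mem_inf.1 (h ▸ hgH)).2⟩

theorem exists_strictAnti_isOpen_of_not_isOpen {C : Subgroup G} (hC : IsClosed (C : Set G))
    (hCo : ¬IsOpen (C : Set G)) :
    ∃ H : ℕ → Subgroup G, StrictAnti H ∧ (∀ n, IsOpen (H n : Set G)) ∧ ∀ n, C ≤ H n := by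
  let T := {H : Subgroup G // IsOpen (H : Set G) ∧ C ≤ H}
  have : NoMinOrder T := ⟨fun ⟨H, hHo, hCH⟩ ↦
    let ⟨H', hH'o, hCH', hlt⟩ := exists_isOpen_lt_of_not_isOpen hC hCo hHo hCH
    ⟨⟨H', hH'o, hCH'⟩, hlt⟩⟩
  have : Nonempty T := ⟨⟨⊤, isOpen_univ, le_top⟩⟩
  obtain ⟨H, hH⟩ := Nat.exists_strictAnti T
  exact ⟨fun n ↦ (H n).1, fun _ _ h ↦ hH h, fun n ↦ (H n).2.1, fun n ↦ (H n).2.2⟩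

end Profinite

end Subgroup

theorem setOf_conj_eq_orbit {G : Type*} [Group G] (x : G) :
    {y : G | ∃ g : G, y = g⁻¹ * x * g} = MulAction.orbit (ConjAct G) x := by
  ext y
  rw [ConjAct.mem_orbit_conjAct, isConj_comm, isConj_iff]
  exact ⟨fun ⟨g, hg⟩ ↦ ⟨g⁻¹, by simp [hg]⟩, fun ⟨g, hg⟩ ↦ ⟨g⁻¹, by simp [← hg]⟩⟩

theorem mk_setOf_conj {G : Type*} [Group G] (x : G) :
    #{y : G | ∃ g : G, y = g⁻¹ * x * g} = #(G ⧸ Subgroup.centralizer {x}) := by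
  rw [setOf_conj_eq_orbit]
  exact mk_congr ((MulAction.orbitEquivQuotientStabilizer (ConjAct G) x).trans
    (Subgroup.quotientEquivOfEq (ConjAct.stabilizer_eq_centralizer x)))

/-- In a profinite group, a conjugacy class of cardinality strictly less than
the continuum is finite. -/
theorem stmt5 {G : Type*} [Group G] [TopologicalSpace G] [IsTopologicalGroup G]
    [CompactSpace G] [T2Space G] [TotallyDisconnectedSpace G]
    (x : G)
    (hcard : Cardinal.mk {y : G | ∃ g : G, y = g⁻¹ * x * g} < Cardinal.continuum) :
    {y : G | ∃ g : G, y = g⁻¹ * x * g}.Finite := by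
  set C := Subgroup.centralizer {x}
  have hC : IsClosed (C : Set G) := Set.isClosed_centralizer {x}
  by_cases hCo : IsOpen (C : Set G)
  · have : Finite (G ⧸ C) := C.quotient_finite_of_isOpen hCo
    rw [← Set.finite_coe_iff, ← lt_aleph0_iff_finite, mk_setOf_conj]
    exact lt_aleph0_of_finite _
  · obtain ⟨H, hH, hHo, hCH⟩ := Subgroup.exists_strictAnti_isOpen_of_not_isOpen hC hCo
    have hcont : 𝔠 ≤ #(G ⧸ C) := Subgroup.continuum_le_mk_quotient_of_strictAnti hH
      (fun n ↦ (H n).isClosed_of_isOpen (hHo n)) hCH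
    exact absurd hcard (mk_setOf_conj x ▸ hcont.not_gt)
end

section
/- Let G be a profinite group and g ∈ G, and suppose the set of n-Engel values {[h, g, …, g] (g repeated n times) : h ∈ G} has cardinality strictly smaller than 2^ℵ₀. Then there exist an element s ∈ G, an open normal subgroup N of G, and an element b ∈ G such that [x·b, g, …, g] = s (g repeated n times) for all x ∈ N. -/
open Set Filter Topology
open scoped Cardinal

theorem continuous_engel_left {G : Type*} [Group G] [TopologicalSpace G] [IsTopologicalGroup G]
    (g : G) (n : ℕ) : Continuous fun x : G => engel x g n := by
  induction n with
  | zero => exact continuous_id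
  | succ n ih => exact ((ih.inv.mul continuous_const).mul ih).mul continuous_const

theorem ProfiniteGrp.exists_openNormalSubgroup_mul_subset {G : Type*} [Group G]
    [TopologicalSpace G] [IsTopologicalGroup G] [CompactSpace G] [TotallyDisconnectedSpace G]
    {b : G} {U : Set G} (hU : U ∈ 𝓝 b) : ∃ N : OpenNormalSubgroup G, ∀ x ∈ N, x * b ∈ U := by
  obtain ⟨V, hVU, hVo, hbV⟩ := mem_nhds_iff.1 hU
  obtain ⟨N, hN⟩ := exist_openNormalSubgroup_sub_open_nhds_of_one
    (hVo.preimage (continuous_mul_const b)) (by simpa using hbV)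
  exact ⟨N, fun x hx => hVU (hN hx)⟩

theorem preperfect_range_of_frequently_ne {X Y : Type*} [TopologicalSpace X] [TopologicalSpace Y]
    {f : X → Y} (hf : Continuous f) (h : ∀ x, ∃ᶠ x' in 𝓝 x, f x' ≠ f x) :
    Preperfect (range f) := by
  rw [preperfect_iff_nhds]
  rintro _ ⟨x, rfl⟩ U hU
  obtain ⟨x', hne, hx'U⟩ := ((h x).and_eventually (hf.continuousAt hU)).exists
  exact ⟨f x', ⟨hx'U, mem_range_self x'⟩, hne⟩

namespace CantorScheme

theorem Antitone.map_of_isCompact {β α : Type*} [TopologicalSpace α] {A : List β → Set α}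
    (hanti : CantorScheme.Antitone A) (hclosed : ∀ l, IsClosed (A l)) (hcpt : IsCompact (A []))
    (hnonempty : ∀ l, (A l).Nonempty) : (inducedMap A).1 = univ :=
  eq_univ_of_forall fun x =>
    IsCompact.nonempty_iInter_of_sequence_nonempty_isCompact_isClosed (fun n => A (PiNat.res x n))
      (fun n => by simpa only [PiNat.res_succ] using hanti _ _) (fun _ => hnonempty _)
      (by simpa only [PiNat.res_zero] using hcpt) (fun _ => hclosed _)

end CantorScheme

theorem Perfect.exists_bool_splitting {X : Type*} [TopologicalSpace X] [T25Space X] {C : Set X}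
    (hC : Perfect C) (hne : C.Nonempty) :
    ∃ D : Bool → Set X, (∀ a, Perfect (D a) ∧ (D a).Nonempty ∧ D a ⊆ C) ∧
      Pairwise fun a b => Disjoint (D a) (D b) := by
  obtain ⟨C₀, C₁, h₀, h₁, hdisj⟩ := hC.splitting hne
  refine ⟨fun a => cond a C₁ C₀, Bool.forall_bool.2 ⟨h₀, h₁⟩, ?_⟩
  rintro (_ | _) (_ | _) hab
  exacts [absurd rfl hab, hdisj, hdisj.symm, absurd rfl hab]

theorem Perfect.continuum_le_mk {X : Type*} [TopologicalSpace X] [T25Space X] {C : Set X}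
    (hC : Perfect C) (hne : C.Nonempty) (hcpt : IsCompact C) : 𝔠 ≤ #C := by
  let P := {D : Set X // Perfect D ∧ D.Nonempty}
  choose split hsplit hdisj using fun D : P => D.2.1.exists_bool_splitting D.2.2
  let node : List Bool → P := fun l =>
    l.rec ⟨C, hC, hne⟩ fun a _ D => ⟨split D a, (hsplit D a).1, (hsplit D a).2.1⟩
  let A : List Bool → Set X := fun l => (node l).1
  have hanti : CantorScheme.Antitone A := fun l a => (hsplit (node l) a).2.2
  have hdom : (CantorScheme.inducedMap A).1 = univ :=
    hanti.map_of_isCompact (fun l => (node l).2.1.closed) hcpt (fun l => (node l).2.2)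
  let F : (ℕ → Bool) → C := fun x =>
    ⟨(CantorScheme.inducedMap A).2 ⟨x, hdom ▸ mem_univ x⟩,
      by simpa only [PiNat.res_zero] using CantorScheme.map_mem _ 0⟩
  have hinj : Function.Injective (CantorScheme.inducedMap A).2 :=
    CantorScheme.Disjoint.map_injective fun l => hdisj (node l)
  have hF : Function.Injective F := fun x y hxy =>
    congrArg Subtype.val (hinj (a₁ := ⟨x, _⟩) (a₂ := ⟨y, _⟩) (congrArg Subtype.val hxy))
  have hcard := Cardinal.lift_mk_le_lift_mk_of_injective hF
  open Cardinal in
  rwa [mk_arrow, mk_bool, mk_nat, lift_ofNat, lift_aleph0, two_power_aleph0, lift_continuum,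
    lift_uzero] at hcard

theorem stmt6_general {G : Type*} [Group G] [TopologicalSpace G] [IsTopologicalGroup G]
    [CompactSpace G] [TotallyDisconnectedSpace G]
    (g : G) (n : ℕ)
    (hcard : Cardinal.mk {y : G | ∃ h : G, y = engel h g n} < Cardinal.continuum) :
    ∃ (s : G) (N : Subgroup G) (b : G), N.Normal ∧ IsOpen (N : Set G) ∧
      ∀ x ∈ N, engel (x * b) g n = s := by
  by_contra! hcoset
  set f : G → G := fun x => engel x g n
  have hf : Continuous f := continuous_engel_left g n
  have hnowhere_const : ∀ b, ∃ᶠ y in 𝓝 b, f y ≠ f b := fun b => frequently_iff.2 fun hU => by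
    obtain ⟨N, hN⟩ := ProfiniteGrp.exists_openNormalSubgroup_mul_subset hU
    obtain ⟨x, hx, hne⟩ := hcoset (f b) N b N.isNormal' N.isOpen'
    exact ⟨x * b, hN x hx, hne⟩
  have hperfect : Perfect (range f) :=
    ⟨(isCompact_range hf).isClosed, preperfect_range_of_frequently_ne hf hnowhere_const⟩
  have hrange : range f = {y : G | ∃ h : G, y = engel h g n} := by
    ext y; simp only [mem_range, mem_ofPred_eq, eq_comm, f]
  exact (hrange ▸ hperfect.continuum_le_mk (range_nonempty f) (isCompact_range hf)).not_gt hcard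

/-- If for `g` in a profinite group `G` the set of values `[h, ₙg]` has
cardinality strictly smaller than the continuum, then there are `s ∈ G` and a
coset `Nb` of an open normal subgroup `N` with `[xb, ₙg] = s` for all `x ∈ N`. -/
theorem stmt6 {G : Type*} [Group G] [TopologicalSpace G] [IsTopologicalGroup G]
    [CompactSpace G] [T2Space G] [TotallyDisconnectedSpace G]
    (g : G) (n : ℕ) (hn : 0 < n)
    (hcard : Cardinal.mk {y : G | ∃ h : G, y = engel h g n} < Cardinal.continuum) :
    ∃ (s : G) (N : Subgroup G) (b : G), N.Normal ∧ IsOpen (N : Set G) ∧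
      ∀ x ∈ N, engel (x * b) g n = s :=
  stmt6_general g n hcard
end

section
/- Let G be a profinite group and g ∈ G, and suppose the set of n-Engel values {[h, ₙg] : h ∈ G} has cardinality strictly smaller than 2^ℵ₀. Then there exist a positive integer k, an open normal subgroup N of G, and b ∈ G such that [[x·b, ₙg], g^k] = 1 for all x ∈ N. -/
open Set Cardinal CantorScheme PiNat Topology

section IsolatedPoint

variable {X : Type*} [TopologicalSpace X]

theorem exists_isClosed_disjoint_nhds_subset [T3Space X] {x y : X} (hxy : x ≠ y) {U : Set X}
    (hx : U ∈ 𝓝 x) (hy : U ∈ 𝓝 y) :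
    ∃ C₀ C₁ : Set X, IsClosed C₀ ∧ IsClosed C₁ ∧ C₀ ∈ 𝓝 x ∧ C₁ ∈ 𝓝 y ∧
      C₀ ⊆ U ∧ C₁ ⊆ U ∧ Disjoint C₀ C₁ := by
  obtain ⟨V, hV, W, hW, hVW⟩ := Filter.disjoint_iff.1 (disjoint_nhds_nhds.2 hxy)
  obtain ⟨C₀, hC₀, hC₀c, hC₀V⟩ := exists_mem_nhds_isClosed_subset (Filter.inter_mem hx hV)
  obtain ⟨C₁, hC₁, hC₁c, hC₁W⟩ := exists_mem_nhds_isClosed_subset (Filter.inter_mem hy hW)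
  exact ⟨C₀, C₁, hC₀c, hC₁c, hC₀, hC₁, hC₀V.trans inter_subset_left,
    hC₁W.trans inter_subset_left,
    hVW.mono (hC₀V.trans inter_subset_right) (hC₁W.trans inter_subset_right)⟩

theorem continuum_le_mk_of_splitting [CompactSpace X] (P : Set X → Prop)
    (hclosed : ∀ C, P C → IsClosed C) (hne : ∀ C, P C → C.Nonempty)
    (hsplit : ∀ C, P C → ∃ C₀ C₁, P C₀ ∧ P C₁ ∧ C₀ ⊆ C ∧ C₁ ⊆ C ∧ Disjoint C₀ C₁)
    {C : Set X} (hC : P C) : 𝔠 ≤ #X := by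
  choose C₀ C₁ hP₀ hP₁ h₀ h₁ hdisj using hsplit
  let D : List Bool → {C // P C} := fun l => l.rec ⟨C, hC⟩ fun a _ D =>
    cond a ⟨C₁ D.1 D.2, hP₁ D.1 D.2⟩ ⟨C₀ D.1 D.2, hP₀ D.1 D.2⟩
  let A : List Bool → Set X := fun l => (D l).1
  have hanti : ∀ l a, A (a :: l) ⊆ A l := by
    intro l a
    cases a
    exacts [h₀ _ (D l).2, h₁ _ (D l).2]
  have hdisjA : CantorScheme.Disjoint A := by
    rintro l (_ | _) (_ | _) hab
    exacts [absurd rfl hab, hdisj _ (D l).2, (hdisj _ (D l).2).symm, absurd rfl hab]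
  have hdom : ∀ x, x ∈ (inducedMap A).1 := fun x =>
    IsCompact.nonempty_iInter_of_sequence_nonempty_isCompact_isClosed (fun n => A (res x n))
      (fun n => by simp only [res_succ]; exact hanti _ _) (fun n => hne _ (D _).2)
      (hclosed _ (D (res x 0)).2).isCompact (fun n => hclosed _ (D _).2)
  have hinj : Function.Injective
      fun x : ULift.{0} (ℕ → Bool) => (inducedMap A).2 ⟨x.down, hdom x.down⟩ :=
    fun x y h => ULift.ext _ _ (congrArg Subtype.val (hdisjA.map_injective h))
  simpa using lift_mk_le_lift_mk_of_injective hinj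

theorem exists_isOpen_singleton_of_mk_lt_continuum [CompactSpace X] [T2Space X] [Nonempty X]
    (h : #X < 𝔠) : ∃ x : X, IsOpen {x} := by
  by_contra! hiso
  refine h.not_ge (continuum_le_mk_of_splitting (fun C => IsClosed C ∧ (interior C).Nonempty)
    (fun _ hC => hC.1) (fun _ hC => hC.2.mono interior_subset) ?_ ⟨isClosed_univ, by simp⟩)
  rintro C ⟨-, x, hx⟩
  obtain ⟨y, hy, hyx⟩ : ∃ y ∈ interior C, y ≠ x := by
    by_contra! hsub
    have hCx : interior C = {x} := eq_singleton_iff_unique_mem.2 ⟨hx, hsub⟩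
    exact hiso x (hCx ▸ isOpen_interior)
  obtain ⟨C₀, C₁, hC₀, hC₁, hx₀, hy₁, h₀, h₁, hdisj⟩ :=
    exists_isClosed_disjoint_nhds_subset hyx.symm
      (mem_interior_iff_mem_nhds.1 hx) (mem_interior_iff_mem_nhds.1 hy)
  exact ⟨C₀, C₁, ⟨hC₀, x, mem_interior_iff_mem_nhds.2 hx₀⟩,
    ⟨hC₁, y, mem_interior_iff_mem_nhds.2 hy₁⟩, h₀, h₁, hdisj⟩

theorem Continuous.exists_isOpen_preimage_singleton [CompactSpace X] [Nonempty X] {Y : Type*}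
    [TopologicalSpace Y] [T2Space Y] {f : X → Y} (hf : Continuous f) (h : #(range f) < 𝔠) :
    ∃ x, IsOpen (f ⁻¹' {f x}) := by
  have : CompactSpace (range f) := isCompact_iff_compactSpace.1 (isCompact_range hf)
  obtain ⟨⟨_, x, rfl⟩, hx⟩ := exists_isOpen_singleton_of_mk_lt_continuum h
  refine ⟨x, ?_⟩
  convert hx.preimage hf.rangeFactorization
  ext
  simp [Subtype.ext_iff]

end IsolatedPoint

section Engel

variable {G : Type*} [Group G]

theorem cmt_eq_one_iff_commute {a b : G} : cmt a b = 1 ↔ Commute a b := by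
  rw [show cmt a b = (b * a)⁻¹ * (a * b) by simp [cmt, mul_assoc], inv_mul_eq_one]
  exact eq_comm

theorem map_engel {H : Type*} [Group H] (φ : G →* H) (x g : G) (n : ℕ) :
    φ (engel x g n) = engel (φ x) (φ g) n := by
  induction n with
  | zero => rfl
  | succ n ih => simp only [engel, cmt, map_mul, map_inv, ih]

theorem engel_conj_of_commute {c g : G} (hcg : Commute c g) (x : G) (n : ℕ) :
    engel (c * x * c⁻¹) g n = c * engel x g n * c⁻¹ := by
  simpa [hcg.eq] using (map_engel (MulAut.conj c).toMonoidHom x g n).symm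

theorem continuous_engel [TopologicalSpace G] [IsTopologicalGroup G] (g : G) (n : ℕ) :
    Continuous fun x => engel x g n := by
  induction n with
  | zero => exact continuous_id
  | succ n ih => simp only [engel, cmt]; fun_prop

theorem Subgroup.commute_engel_of_forall_mem_engel_mul_eq {N : Subgroup G} [N.Normal]
    {b g c : G} {n : ℕ} (hN : ∀ x ∈ N, engel (x * b) g n = engel b g n) (hc : c ∈ N)
    (hcg : Commute c g) : Commute c (engel b g n) := by
  have hconj : c * b * c⁻¹ * b⁻¹ ∈ N := by
    simpa [mul_assoc] using N.mul_mem hc (Subgroup.Normal.conj_mem ‹_› _ (N.inv_mem hc) b)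
  have hfix := hN _ hconj
  rw [inv_mul_cancel_right, engel_conj_of_commute hcg] at hfix
  exact mul_inv_eq_iff_eq_mul.1 hfix

end Engel

theorem stmt7_general {G : Type*} [Group G] [TopologicalSpace G] [IsTopologicalGroup G]
    [CompactSpace G] [T2Space G] [TotallyDisconnectedSpace G]
    (g : G) (n : ℕ)
    (hcard : Cardinal.mk {y : G | ∃ h : G, y = engel h g n} < Cardinal.continuum) :
    ∃ (k : ℕ) (N : Subgroup G) (b : G), 0 < k ∧ N.Normal ∧ IsOpen (N : Set G) ∧
      ∀ x ∈ N, cmt (engel (x * b) g n) (g ^ k) = 1 := by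
  have hrange : {y : G | ∃ h : G, y = engel h g n} = range (engel · g n) := by
    ext
    simp [eq_comm]
  obtain ⟨b, hb⟩ := (continuous_engel g n).exists_isOpen_preimage_singleton (hrange ▸ hcard)
  obtain ⟨N, hN⟩ := ProfiniteGrp.exist_openNormalSubgroup_sub_open_nhds_of_one
    (hb.preimage (continuous_mul_const b)) (by simp)
  have hNb : ∀ x ∈ N.toSubgroup, engel (x * b) g n = engel b g n := fun x hx => hN hx
  refine ⟨N.toSubgroup.index, N.toSubgroup, b,
    Nat.pos_of_ne_zero Subgroup.index_ne_zero_of_finite, N.isNormal', N.isOpen', fun x hx => ?_⟩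
  rw [hNb x hx, cmt_eq_one_iff_commute]
  exact (N.toSubgroup.commute_engel_of_forall_mem_engel_mul_eq hNb
    (N.toSubgroup.pow_index_mem g) (Commute.self_pow g _).symm).symm

/-- If for `g` in a profinite group `G` the set of values `[h, ₙg]` has
cardinality strictly smaller than the continuum, then there are a positive
integer `k` and a coset `Nb` of an open normal subgroup `N` such that
`[[xb, ₙg], g^k] = 1` for all `x ∈ N`. -/
theorem stmt7 {G : Type*} [Group G] [TopologicalSpace G] [IsTopologicalGroup G]
    [CompactSpace G] [T2Space G] [TotallyDisconnectedSpace G]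
    (g : G) (n : ℕ) (hn : 0 < n)
    (hcard : Cardinal.mk {y : G | ∃ h : G, y = engel h g n} < Cardinal.continuum) :
    ∃ (k : ℕ) (N : Subgroup G) (b : G), 0 < k ∧ N.Normal ∧ IsOpen (N : Set G) ∧
      ∀ x ∈ N, cmt (engel (x * b) g n) (g ^ k) = 1 :=
  stmt7_general g n hcard
end

section
/- Let p be a prime, G a p-group, and let a, y be elements of G such that the subgroup ⟨a, y⟩ is nilpotent of class at most c and a has order dividing p^m. Then [a, y^{p^{m(c-1)}}] = 1, i.e. a commutes with y^{p^{m(c-1)}}. -/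
open scoped commutatorElement

section

variable {G : Type*} [Group G]

lemma cmt_eq_commutatorElement (a b : G) : cmt a b = ⁅a⁻¹, b⁻¹⁆ := by
  simp [cmt, commutatorElement_def]

lemma map_cmt {H : Type*} [Group H] (f : G →* H) (a b : G) : f (cmt a b) = cmt (f a) (f b) := by
  simp [cmt]

lemma cmt_pow_right_of_commute {a w : G} (h : Commute (cmt a w) w) (k : ℕ) :
    cmt a (w ^ k) = cmt a w ^ k := by
  induction k with
  | zero => simp [cmt]
  | succ k ih =>
    calc cmt a (w ^ (k + 1)) = a⁻¹ * w⁻¹ * a * cmt a (w ^ k) * w := by simp only [cmt]; group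
      _ = a⁻¹ * w⁻¹ * a * (w * cmt a w ^ k) := by rw [ih, mul_assoc, (h.pow_left k).eq]
      _ = cmt a w ^ (k + 1) := by rw [pow_succ']; simp only [cmt]; group

lemma cmt_pow_left_of_commute {a w : G} (h : Commute (cmt a w) a) (k : ℕ) :
    cmt (a ^ k) w = cmt a w ^ k := by
  induction k with
  | zero => simp [cmt]
  | succ k ih =>
    calc cmt (a ^ (k + 1)) w = a⁻¹ * cmt (a ^ k) w * w⁻¹ * a * w := by simp only [cmt]; group
      _ = cmt a w ^ k * a⁻¹ * w⁻¹ * a * w := by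
        rw [ih, ((h.pow_left k).inv_right).symm.eq]
      _ = cmt a w ^ (k + 1) := by rw [pow_succ]; simp only [cmt]; group

lemma cmt_pow_eq_one_of_commute {a w : G} {n : ℕ} (ha : Commute (cmt a w) a)
    (hw : Commute (cmt a w) w) (han : a ^ n = 1) : cmt a (w ^ n) = 1 := by
  rw [cmt_pow_right_of_commute hw, ← cmt_pow_left_of_commute ha, han]
  simp [cmt]

lemma cmt_pow_mem_of_commutatorElement_mem {N : Subgroup G} [N.Normal] {a w : G} {n : ℕ}
    (ha : ⁅cmt a w, a⁆ ∈ N) (hw : ⁅cmt a w, w⁆ ∈ N) (han : a ^ n = 1) : cmt a (w ^ n) ∈ N := by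
  let π := QuotientGroup.mk' N
  have hcomm : ∀ x, ⁅cmt a w, x⁆ ∈ N → Commute (cmt (π a) (π w)) (π x) := by
    intro x hx
    rw [← map_cmt, ← commutatorElement_eq_one_iff_commute, ← map_commutatorElement]
    exact (QuotientGroup.eq_one_iff _).mpr hx
  rw [← QuotientGroup.eq_one_iff, ← QuotientGroup.mk'_apply, map_cmt, map_pow]
  exact cmt_pow_eq_one_of_commute (hcomm a ha) (hcomm w hw) (by rw [← map_pow, han, map_one])

lemma cmt_pow_pow_mem_top_lowerCentralSeries {a : G} {n : ℕ} (han : a ^ n = 1) (y : G) (k : ℕ) :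
    cmt a (y ^ n ^ k) ∈ (⊤ : Subgroup G).lowerCentralSeries (k + 1) := by
  induction k with
  | zero =>
    rw [pow_zero, pow_one, cmt_eq_commutatorElement]
    exact Subgroup.commutator_mem_commutator (Subgroup.mem_top _) (Subgroup.mem_top _)
  | succ k ih =>
    rw [pow_succ, pow_mul]
    exact cmt_pow_mem_of_commutatorElement_mem
      (Subgroup.commutator_mem_commutator ih (Subgroup.mem_top _))
      (Subgroup.commutator_mem_commutator ih (Subgroup.mem_top _)) han

lemma cmt_pow_pow_mem_lowerCentralSeries {S : Subgroup G} {a y : G} (ha : a ∈ S) (hy : y ∈ S)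
    {n : ℕ} (han : a ^ n = 1) (k : ℕ) : cmt a (y ^ n ^ k) ∈ S.lowerCentralSeries (k + 1) := by
  rw [← Subgroup.top_subtype_lowerCentralSeries]
  refine ⟨_, cmt_pow_pow_mem_top_lowerCentralSeries (a := ⟨a, ha⟩) (Subtype.ext han) ⟨y, hy⟩ k, ?_⟩
  simp [map_cmt]

end

theorem stmt13_general {G : Type*} [Group G] (p : ℕ)
    (a y : G) (c m : ℕ)
    (hnil : lowerCentralSeries (Subgroup.closure ({a, y} : Set G)) c = ⊥)
    (ha : a ^ p ^ m = 1) :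
    cmt a (y ^ p ^ (m * (c - 1))) = 1 := by
  have hmem := cmt_pow_pow_mem_lowerCentralSeries
    (Subgroup.subset_closure (Set.mem_insert a {y}))
    (Subgroup.subset_closure (Set.mem_insert_of_mem a rfl)) ha (c - 1)
  rw [pow_mul, ← Subgroup.mem_bot, ← hnil]
  exact Subgroup.lowerCentralSeries_antitone _ (by omega) hmem

/-- In a `p`-group, if `⟨a,y⟩` is nilpotent of class at most `c` and
`a^(p^m) = 1`, then `[a, y^(p^(m(c-1)))] = 1`. -/
theorem stmt13 {G : Type*} [Group G] (p : ℕ) (hp : p.Prime) (hG : IsPGroup p G)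
    (a y : G) (c m : ℕ) (hc : 0 < c) (hm : 0 < m)
    (hnil : lowerCentralSeries (Subgroup.closure ({a, y} : Set G)) c = ⊥)
    (ha : a ^ p ^ m = 1) :
    cmt a (y ^ p ^ (m * (c - 1))) = 1 :=
  stmt13_general p a y c m hnil ha
end
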